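/- Let R be a ring and (𝒯, ℱ) a torsion pair in R-Mod. If B₁ and B₂ are non-isomorphic torsionfree, almost torsion modules for (𝒯, ℱ), then Hom_R(B₁, B₂) = 0. In particular, the torsionfree, almost torsion modules form a semibrick. -/

import Mathlib

universe u v
variable {R : Type u} [Ring R]

/-- A torsion pair in `R`-Mod: `Hom(𝒯, ℱ) = 0` and both classes are maximal with
this property. -/
def IsTorsionPair (R : Type u) [Ring R] (𝒯 ℱ : Set (ModuleCat.{v} R)) : Prop :=
  (∀ T ∈ 𝒯, ∀ F ∈ ℱ, ∀ f : ↑T →ₗ[R] ↑F, f = 0) ∧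
  (∀ M : ModuleCat.{v} R, (∀ F ∈ ℱ, ∀ f : ↑M →ₗ[R] ↑F, f = 0) → M ∈ 𝒯) ∧
  (∀ M : ModuleCat.{v} R, (∀ T ∈ 𝒯, ∀ f : ↑T →ₗ[R] ↑M, f = 0) → M ∈ ℱ)

/-- Every module has a torsion submodule, lying in `𝒯`, with quotient in `ℱ`. -/
def HasTorsionRadical (R : Type u) [Ring R] (𝒯 ℱ : Set (ModuleCat.{v} R)) : Prop :=
  ∀ M : ModuleCat.{v} R, ∃ tM : Submodule R ↑M,
    ModuleCat.of R tM ∈ 𝒯 ∧ ModuleCat.of R (↑M ⧸ tM) ∈ ℱ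


/-- `B` is torsionfree, almost torsion for `(𝒯, ℱ)`: it is a nonzero torsionfree
module, every proper quotient is torsion, and for every short exact sequence
`0 → B → F → M → 0` with `F ∈ ℱ` also `M ∈ ℱ`. -/
def IsTFAlmostTorsion (𝒯 ℱ : Set (ModuleCat.{v} R)) (B : ModuleCat.{v} R) : Prop :=
  Nontrivial ↑B ∧ B ∈ ℱ ∧
  (∀ N : Submodule R ↑B, N ≠ ⊥ → ModuleCat.of R (↑B ⧸ N) ∈ 𝒯) ∧
  (∀ F ∈ ℱ, ∀ i : ↑B →ₗ[R] ↑F, Function.Injective i →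
    ModuleCat.of R (↑F ⧸ LinearMap.range i) ∈ ℱ)

/-
Let `f : B₁ → B₂` be nonzero. Its image is a quotient of `B₁` lying in `ℱ`; were `ker f`
nonzero, that quotient would be torsion, hence zero, so `f` is injective. Its cokernel is then
torsionfree by condition (3) for `B₁`, and, being a proper quotient of `B₂`, torsion by
condition (2) for `B₂`; so it vanishes and `f` is an isomorphism.
-/

namespace IsTorsionPair

variable {𝒯 ℱ : Set (ModuleCat.{v} R)}

theorem subsingleton_of_mem_of_mem (htp : IsTorsionPair R 𝒯 ℱ) {M : ModuleCat.{v} R}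
    (hT : M ∈ 𝒯) (hF : M ∈ ℱ) : Subsingleton M :=
  ⟨fun x y => by
    have hid := htp.1 M hT M hF LinearMap.id
    rw [← LinearMap.id_apply (R := R) x, ← LinearMap.id_apply (R := R) y, hid]
    rfl⟩

end IsTorsionPair

namespace IsTFAlmostTorsion

variable {𝒯 ℱ : Set (ModuleCat.{v} R)} {B₁ B₂ : ModuleCat.{v} R}

theorem injective_of_ne_zero (htp : IsTorsionPair R 𝒯 ℱ) (h₁ : IsTFAlmostTorsion 𝒯 ℱ B₁)
    {F : ModuleCat.{v} R} (hF : F ∈ ℱ) {f : ↑B₁ →ₗ[R] ↑F} (hf : f ≠ 0) :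
    Function.Injective f := by
  rw [← LinearMap.ker_eq_bot]
  by_contra hker
  have hfactor := htp.1 _ (h₁.2.2.1 _ hker) F hF ((LinearMap.ker f).liftQ f le_rfl)
  exact hf (LinearMap.ext fun x => by
    simpa using LinearMap.congr_fun hfactor (Submodule.Quotient.mk x))

theorem surjective_of_injective (htp : IsTorsionPair R 𝒯 ℱ) (h₁ : IsTFAlmostTorsion 𝒯 ℱ B₁)
    (h₂ : IsTFAlmostTorsion 𝒯 ℱ B₂) {f : ↑B₁ →ₗ[R] ↑B₂} (hf : f ≠ 0)
    (hinj : Function.Injective f) : Function.Surjective f := by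
  have hcokerF := h₁.2.2.2 B₂ h₂.2.1 f hinj
  have hcokerT := h₂.2.2.1 _ (LinearMap.range_eq_bot.not.mpr hf)
  have := htp.subsingleton_of_mem_of_mem hcokerT hcokerF
  exact LinearMap.range_eq_top.mp (Submodule.Quotient.subsingleton_iff.mp this)

end IsTFAlmostTorsion

/-- Two non-isomorphic torsionfree, almost torsion modules for the same torsion pair
are Hom-orthogonal; hence the torsionfree, almost torsion modules form a semibrick. -/
theorem stmt_6 (𝒯 ℱ : Set (ModuleCat.{v} R)) (htp : IsTorsionPair R 𝒯 ℱ)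
    (B₁ B₂ : ModuleCat.{v} R)
    (h₁ : IsTFAlmostTorsion 𝒯 ℱ B₁) (h₂ : IsTFAlmostTorsion 𝒯 ℱ B₂)
    (hne : ¬ Nonempty (↑B₁ ≃ₗ[R] ↑B₂)) :
    ∀ f : ↑B₁ →ₗ[R] ↑B₂, f = 0 := by
  intro f
  by_contra hf
  have hinj := h₁.injective_of_ne_zero htp h₂.2.1 hf
  have hsurj := h₁.surjective_of_injective htp h₂ hf hinj
  exact hne ⟨LinearEquiv.ofBijective f ⟨hinj, hsurj⟩⟩
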